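/- For every n > 6, the cycle and path satisfy φ(C_n) ≥ φ(P_{n-1}) + 2. -/

import Mathlib

open SimpleGraph

/-- A dissociation set: a set of vertices inducing a subgraph of maximum degree at most 1,
i.e., every vertex of `S` has at most one neighbour inside `S`. -/
def IsDissoc {V : Type*} (G : SimpleGraph V) (S : Set V) : Prop :=
  ∀ v ∈ S, {u | u ∈ S ∧ G.Adj v u}.Subsingleton

/-- A maximal dissociation set: a dissociation set not properly contained in another one. -/
def IsMaxDissoc {V : Type*} (G : SimpleGraph V) (S : Set V) : Prop :=
  IsDissoc G S ∧ ∀ T : Set V, IsDissoc G T → S ⊆ T → S = T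

/-- `phi G` is the number of maximal dissociation sets of `G`. -/
noncomputable def phi {V : Type*} (G : SimpleGraph V) : ℕ :=
  {S : Set V | IsMaxDissoc G S}.ncard

/-- The number of maximal dissociation sets of `G` not containing `u`. -/
noncomputable def phiNot {V : Type*} (G : SimpleGraph V) (u : V) : ℕ :=
  {S : Set V | IsMaxDissoc G S ∧ u ∉ S}.ncard

/-- The number of maximal dissociation sets `S` of `G` with `u ∈ S` and
`u` of degree 0 in the subgraph induced by `S`. -/
noncomputable def phi0 {V : Type*} (G : SimpleGraph V) (u : V) : ℕ :=
  {S : Set V | IsMaxDissoc G S ∧ u ∈ S ∧ ∀ x ∈ S, ¬ G.Adj u x}.ncard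

/-- The number of maximal dissociation sets `S` of `G` with `u ∈ S` and
`u` of degree 1 in the subgraph induced by `S`. -/
noncomputable def phi1 {V : Type*} (G : SimpleGraph V) (u : V) : ℕ :=
  {S : Set V | IsMaxDissoc G S ∧ u ∈ S ∧ ∃! x, x ∈ S ∧ G.Adj u x}.ncard

/-- A unicyclic graph: a connected graph whose number of edges equals its number of vertices
(equivalently, a connected graph with exactly one cycle). -/
def IsUnicyclic {V : Type*} [Fintype V] (G : SimpleGraph V) : Prop :=
  G.Connected ∧ G.edgeSet.ncard = Fintype.card V

/-- The tree `T(p,q)` (for `q ≤ p`): obtained from the star `K_{1,p}` by subdividing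
exactly `q` of its edges.  The centre is `Sum.inl ()`, the `p` neighbours of the centre are
`Sum.inr (Sum.inl i)`, and for `j < q` the vertex `Sum.inr (Sum.inr j)` is the subdivision
pendant attached to the `j`-th neighbour.  It has `1 + p + q` vertices. -/
def treeT (p q : ℕ) (h : q ≤ p) : SimpleGraph (Unit ⊕ Fin p ⊕ Fin q) :=
  SimpleGraph.fromRel fun a b =>
    (∃ i : Fin p, a = Sum.inl () ∧ b = Sum.inr (Sum.inl i)) ∨
    (∃ j : Fin q, a = Sum.inr (Sum.inl (Fin.castLE h j)) ∧ b = Sum.inr (Sum.inr j))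

/-- The unicyclic graph `U(p,q)` (for `q ≤ p`): obtained by identifying one vertex of the
triangle `K₃` with the centre of `T(p,q)`.  The centre is `Sum.inl ()`, the two other triangle
vertices are `Sum.inr (Sum.inl 0)` and `Sum.inr (Sum.inl 1)`, and the copy of `T(p,q)` sits on
the remaining vertices.  It has `3 + p + q` vertices. -/
def graphU (p q : ℕ) (h : q ≤ p) : SimpleGraph (Unit ⊕ Fin 2 ⊕ Fin p ⊕ Fin q) :=
  SimpleGraph.fromRel fun a b =>
    (a = Sum.inl () ∧ b = Sum.inr (Sum.inl 0)) ∨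
    (a = Sum.inl () ∧ b = Sum.inr (Sum.inl 1)) ∨
    (a = Sum.inr (Sum.inl 0) ∧ b = Sum.inr (Sum.inl 1)) ∨
    (∃ i : Fin p, a = Sum.inl () ∧ b = Sum.inr (Sum.inr (Sum.inl i))) ∨
    (∃ j : Fin q, a = Sum.inr (Sum.inr (Sum.inl (Fin.castLE h j))) ∧
      b = Sum.inr (Sum.inr (Sum.inr j)))

/-- The unicyclic graph obtained from the cycle `C_r` by attaching one pendant vertex
`Sum.inr j` to the cycle vertex `Sum.inl (f j)` for each `j : Fin t`.  For injective `f`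
this is a member of the class `𝒰_{r,t}`. -/
def graphUrtF (r t : ℕ) (f : Fin t → Fin r) : SimpleGraph (Fin r ⊕ Fin t) :=
  SimpleGraph.fromRel fun a b =>
    (∃ i j : Fin r, a = Sum.inl i ∧ b = Sum.inl j ∧ (cycleGraph r).Adj i j) ∨
    (∃ j : Fin t, a = Sum.inl (f j) ∧ b = Sum.inr j)

/-- The canonical member `U_{r,t}` of `𝒰_{r,t}` (for `t ≤ r`): the cycle `C_r` with one
pendant vertex attached to each of its first `t` vertices. -/
def graphUrt (r t : ℕ) (h : t ≤ r) : SimpleGraph (Fin r ⊕ Fin t) :=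
  graphUrtF r t (Fin.castLE h)

/-- A caterpillar: a tree in which deleting all vertices of degree 1 leaves a path. -/
def IsCaterpillar {V : Type*} [Fintype V] (G : SimpleGraph V) : Prop :=
  G.IsTree ∧ ∃ m : ℕ,
    Nonempty ((G.induce {v | 2 ≤ (G.neighborSet v).ncard}) ≃g SimpleGraph.pathGraph m)

/-- The graph `G₁` obtained from `U` by adding `k` new pendant vertices
`v₁ = Sum.inr 0, …, v_k = Sum.inr (k-1)`, each adjacent to `w`. -/
def addPendants {V : Type*} (U : SimpleGraph V) (w : V) (k : ℕ) : SimpleGraph (V ⊕ Fin k) :=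
  SimpleGraph.fromRel fun a b =>
    (∃ x y, a = Sum.inl x ∧ b = Sum.inl y ∧ U.Adj x y) ∨
    (∃ j : Fin k, a = Sum.inl w ∧ b = Sum.inr j)

/-- The graph `G₂ = G₁ - w v_k + v₁ v_k`: obtained from `U` by attaching the pendant vertices
`v₁, …, v_{k-1}` to `w` and the vertex `v_k` to `v₁`. -/
def swapPendant {V : Type*} (U : SimpleGraph V) (w : V) (k : ℕ) : SimpleGraph (V ⊕ Fin k) :=
  SimpleGraph.fromRel fun a b =>
    (∃ x y, a = Sum.inl x ∧ b = Sum.inl y ∧ U.Adj x y) ∨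
    (∃ j : Fin k, j.val < k - 1 ∧ a = Sum.inl w ∧ b = Sum.inr j) ∨
    (∃ j₀ j₁ : Fin k, j₀.val = 0 ∧ j₁.val = k - 1 ∧ a = Sum.inr j₀ ∧ b = Sum.inr j₁)

/-- The graph obtained from `H` by attaching a pendant path of length 2 at `w`:
two new vertices `v = Sum.inr 0` and `u = Sum.inr 1` with edges `w v` and `v u`. -/
def addPath2 {V : Type*} (H : SimpleGraph V) (w : V) : SimpleGraph (V ⊕ Fin 2) :=
  SimpleGraph.fromRel fun a b =>
    (∃ x y, a = Sum.inl x ∧ b = Sum.inl y ∧ H.Adj x y) ∨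
    (a = Sum.inl w ∧ b = Sum.inr 0) ∨
    (a = Sum.inr 0 ∧ b = Sum.inr 1)

/-! The embedding `i ↦ i` of `P_{n-1}` into `C_n` misses one vertex `w`. A maximal dissociation
set of the path extends to one of the cycle with the same trace on the path, so `φ(P_{n-1})` is at
most the number of maximal dissociation sets of `C_n` whose trace is maximal. Two with a
non-maximal trace come from extending `{w, w - 1, w - 4, w - 5}` and its mirror image
`{w, w + 1, w + 4, w + 5}`: `w - 2` can be added to the trace of the first, because its neighbour
`w - 1` has lost its partner `w` and its other neighbour `w - 3` is blocked by the pair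
`w - 4, w - 5`. -/

section

variable {V W : Type*} {G : SimpleGraph V} {H : SimpleGraph W}

lemma IsDissoc.anti {S T : Set V} (hT : IsDissoc G T) (h : S ⊆ T) : IsDissoc G S :=
  fun v hv => (hT v (h hv)).anti fun _ hu => ⟨h hu.1, hu.2⟩

lemma IsDissoc.image (f : H ↪g G) {S : Set W} (hS : IsDissoc H S) : IsDissoc G (f '' S) := by
  rintro _ ⟨v, hv, rfl⟩ _ ⟨⟨u₁, hu₁, rfl⟩, h₁⟩ _ ⟨⟨u₂, hu₂, rfl⟩, h₂⟩
  exact congrArg f (hS v hv ⟨hu₁, f.map_adj_iff.mp h₁⟩ ⟨hu₂, f.map_adj_iff.mp h₂⟩)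

lemma IsDissoc.preimage (f : H ↪g G) {T : Set V} (hT : IsDissoc G T) :
    IsDissoc H (f ⁻¹' T) :=
  fun v hv _ hu₁ _ hu₂ => f.injective <|
    hT (f v) hv ⟨hu₁.1, f.map_adj_iff.mpr hu₁.2⟩ ⟨hu₂.1, f.map_adj_iff.mpr hu₂.2⟩

lemma IsDissoc.notMem_of_adj {T : Set V} (hT : IsDissoc G T) {x y z : V} (hx : x ∈ T)
    (hy : y ∈ T) (hxy : G.Adj x y) (hxz : G.Adj x z) (hzy : z ≠ y) : z ∉ T :=
  fun hz => hzy (hT x hx ⟨hz, hxz⟩ ⟨hy, hxy⟩)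

lemma IsDissoc.insert_of_unique_partner {S : Set V} (hS : IsDissoc G S) {x y : V}
    (hx : ∀ z ∈ S, G.Adj x z → z = y) (hy : ∀ z ∈ S, ¬ G.Adj y z) :
    IsDissoc G (insert x S) := by
  have only_y : ∀ u ∈ insert x S, G.Adj x u → u = y := by
    rintro u (rfl | hu) hxu
    exacts [(G.irrefl hxu).elim, hx u hu hxu]
  rintro w (rfl | hw) u₁ ⟨hu₁, h₁⟩ u₂ ⟨hu₂, h₂⟩
  · rw [only_y u₁ hu₁ h₁, only_y u₂ hu₂ h₂]
  by_cases hwy : w = y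
  · subst hwy
    have only_x : ∀ u ∈ insert x S, G.Adj w u → u = x := by
      rintro u (rfl | hu) hwu
      exacts [rfl, (hy u hu hwu).elim]
    rw [only_x u₁ hu₁ h₁, only_x u₂ hu₂ h₂]
  have in_S : ∀ u ∈ insert x S, G.Adj w u → u ∈ S := by
    rintro u (rfl | hu) hwu
    exacts [(hwy (hx w hw hwu.symm)).elim, hu]
  exact hS w hw ⟨in_S u₁ hu₁ h₁, h₁⟩ ⟨in_S u₂ hu₂ h₂, h₂⟩

lemma IsDissoc.exists_isMaxDissoc_superset [Finite V] {D : Set V} (hD : IsDissoc G D) :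
    ∃ T, IsMaxDissoc G T ∧ D ⊆ T := by
  obtain ⟨T, ⟨hT, hDT⟩, hmax⟩ :=
    (Set.toFinite {T : Set V | IsDissoc G T ∧ D ⊆ T}).exists_maximalFor id _ ⟨D, hD, le_rfl⟩
  exact ⟨T, ⟨hT, fun T' hT' h => h.antisymm (hmax ⟨hT', hDT.trans h⟩ h)⟩, hDT⟩

lemma IsMaxDissoc.exists_preimage_eq [Finite V] (f : H ↪g G) {S : Set W}
    (hS : IsMaxDissoc H S) : ∃ T, IsMaxDissoc G T ∧ f ⁻¹' T = S := by
  obtain ⟨T, hT, hST⟩ := (hS.1.image f).exists_isMaxDissoc_superset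
  have hS_sub : S ⊆ f ⁻¹' T := fun v hv => hST ⟨v, hv, rfl⟩
  exact ⟨T, hT, (hS.2 _ (hT.1.preimage f) hS_sub).symm⟩

theorem phi_add_ncard_le_phi [Finite V] (f : H ↪g G) {𝒯 : Set (Set V)}
    (h𝒯 : ∀ T ∈ 𝒯, IsMaxDissoc G T ∧ ¬ IsMaxDissoc H (f ⁻¹' T)) :
    phi H + 𝒯.ncard ≤ phi G := by
  set 𝒜 := {T : Set V | IsMaxDissoc G T ∧ IsMaxDissoc H (f ⁻¹' T)}
  have h𝒜 : phi H ≤ 𝒜.ncard := by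
    refine le_trans (Set.ncard_le_ncard (t := (f ⁻¹' ·) '' 𝒜) ?_ (Set.toFinite _))
      (Set.ncard_image_le (Set.toFinite _))
    intro S hS
    obtain ⟨T, hT, rfl⟩ := IsMaxDissoc.exists_preimage_eq f hS
    exact ⟨T, ⟨hT, hS⟩, rfl⟩
  have hdisj : Disjoint 𝒜 𝒯 :=
    Set.disjoint_left.mpr fun T hA hT => (h𝒯 T hT).2 hA.2
  calc phi H + 𝒯.ncard ≤ 𝒜.ncard + 𝒯.ncard := Nat.add_le_add_right h𝒜 _
    _ = (𝒜 ∪ 𝒯).ncard := (Set.ncard_union_eq hdisj).symm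
    _ ≤ phi G := Set.ncard_le_ncard
        (Set.union_subset (fun T hT => hT.1) fun T hT => (h𝒯 T hT).1) (Set.toFinite _)

lemma exists_isMaxDissoc_not_isMaxDissoc_preimage [Finite V] (f : H ↪g G) {v a b c d e : V}
    (hv : v ∉ Set.range f) (hb : b ∈ Set.range f) (hav : G.Adj a v) (hab : G.Adj a b)
    (hNa : ∀ z, G.Adj a z → z = v ∨ z = b) (hNb : ∀ z, G.Adj b z → z = a ∨ z = c)
    (hdc : G.Adj d c) (hde : G.Adj d e) (hce : c ≠ e) (hD : IsDissoc G {v, a, d, e}) :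
    ∃ T, IsMaxDissoc G T ∧ v ∈ T ∧ a ∈ T ∧ ¬ IsMaxDissoc H (f ⁻¹' T) := by
  obtain ⟨T, hT, hDT⟩ := hD.exists_isMaxDissoc_superset
  have hvT : v ∈ T := hDT (by simp)
  have haT : a ∈ T := hDT (by simp)
  refine ⟨T, hT, hvT, haT, fun hmax => ?_⟩
  obtain ⟨b', rfl⟩ := hb
  have hbT : f b' ∉ T :=
    hT.1.notMem_of_adj haT hvT hav hab fun h => hv ⟨b', h⟩
  have hcT : c ∉ T := hT.1.notMem_of_adj (hDT (by simp)) (hDT (by simp)) hde hdc hce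
  have hins : IsDissoc G (insert (f b') (T \ {v})) := by
    refine (hT.1.anti Set.sdiff_subset).insert_of_unique_partner (y := a)
      (fun z hz hbz => ?_) fun z hz haz => ?_
    · rcases hNb z hbz with rfl | rfl
      exacts [rfl, (hcT hz.1).elim]
    · rcases hNa z haz with rfl | rfl
      exacts [hz.2 rfl, hbT hz.1]
  have hsub : f ⁻¹' T ⊆ f ⁻¹' insert (f b') (T \ {v}) :=
    fun u hu => Or.inr ⟨hu, fun h => hv ⟨u, h⟩⟩
  have hb' : b' ∈ f ⁻¹' insert (f b') (T \ {v}) := Or.inl rfl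
  rw [← hmax.2 _ (hins.preimage f) hsub] at hb'
  exact hbT hb'

end

lemma cycleGraph_adj_iff_val {k : ℕ} {u v : Fin (k + 2)} :
    (cycleGraph (k + 2)).Adj u v ↔ u.val + 1 = v.val ∨ v.val + 1 = u.val ∨
      (u.val = k + 1 ∧ v.val = 0) ∨ (v.val = k + 1 ∧ u.val = 0) := by
  have hu := u.isLt
  have hv := v.isLt
  rw [cycleGraph_adj']
  rcases lt_trichotomy u v with h | rfl | h
  · rw [Fin.coe_sub_iff_lt.mpr h, Fin.coe_sub_iff_le.mpr h.le]
    rw [Fin.lt_def] at h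
    omega
  · simp only [sub_self, Fin.val_zero]
    omega
  · rw [Fin.coe_sub_iff_le.mpr h.le, Fin.coe_sub_iff_lt.mpr h]
    rw [Fin.lt_def] at h
    omega

def pathGraphEmbeddingCycleGraph (k : ℕ) : pathGraph (k + 1) ↪g cycleGraph (k + 2) where
  toEmbedding := Fin.castSuccEmb
  map_rel_iff' {u v} := by
    simp only [Fin.castSuccEmb_apply, cycleGraph_adj_iff_val, Fin.val_castSucc, pathGraph_adj]
    omega

lemma exists_pair_isMaxDissoc_cycleGraph_not_isMaxDissoc_preimage {m : ℕ} (hm : 5 ≤ m) :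
    ∃ T₁ T₂ : Set (Fin (m + 2)), T₁ ≠ T₂ ∧ ∀ T ∈ ({T₁, T₂} : Set (Set (Fin (m + 2)))),
      IsMaxDissoc (cycleGraph (m + 2)) T ∧
        ¬ IsMaxDissoc (pathGraph (m + 1)) (pathGraphEmbeddingCycleGraph m ⁻¹' T) := by
  set f := pathGraphEmbeddingCycleGraph m
  have hlast : Fin.last _ ∉ Set.range f := fun ⟨i, hi⟩ => Fin.castSucc_ne_last i hi
  obtain ⟨T₁, hT₁, -, ha₁, hT₁'⟩ : ∃ T, IsMaxDissoc (cycleGraph (m + 2)) T ∧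
      Fin.last _ ∈ T ∧ ⟨m, by omega⟩ ∈ T ∧ ¬ IsMaxDissoc (pathGraph (m + 1)) (f ⁻¹' T) := by
    refine exists_isMaxDissoc_not_isMaxDissoc_preimage f hlast (b := ⟨m - 1, by omega⟩)
      (c := ⟨m - 2, by omega⟩) (d := ⟨m - 3, by omega⟩) (e := ⟨m - 4, by omega⟩)
      ⟨⟨m - 1, by omega⟩, rfl⟩ ?_ ?_ ?_ ?_ ?_ ?_ ?_ ?hD
    case hD =>
      intro v hv u₁ ⟨hu₁, h₁⟩ u₂ ⟨hu₂, h₂⟩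
      grind [cycleGraph_adj_iff_val]
    all_goals grind [cycleGraph_adj_iff_val]
  obtain ⟨T₂, hT₂, hv₂, ha₂, hT₂'⟩ : ∃ T, IsMaxDissoc (cycleGraph (m + 2)) T ∧
      Fin.last _ ∈ T ∧ ⟨0, by omega⟩ ∈ T ∧ ¬ IsMaxDissoc (pathGraph (m + 1)) (f ⁻¹' T) := by
    refine exists_isMaxDissoc_not_isMaxDissoc_preimage f hlast (b := ⟨1, by omega⟩)
      (c := ⟨2, by omega⟩) (d := ⟨3, by omega⟩) (e := ⟨4, by omega⟩)
      ⟨⟨1, by omega⟩, rfl⟩ ?_ ?_ ?_ ?_ ?_ ?_ ?_ ?hD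
    case hD =>
      intro v hv u₁ ⟨hu₁, h₁⟩ u₂ ⟨hu₂, h₂⟩
      grind [cycleGraph_adj_iff_val]
    all_goals grind [cycleGraph_adj_iff_val]
  refine ⟨T₁, T₂, fun h => ?_, ?_⟩
  · refine hT₂.1.notMem_of_adj hv₂ ha₂ ?_ ?_ ?_ (h ▸ ha₁) <;> grind [cycleGraph_adj_iff_val]
  · rintro T (rfl | rfl)
    exacts [⟨hT₁, hT₁'⟩, ⟨hT₂, hT₂'⟩]

/-- for `n > 6`, `φ(C_n) ≥ φ(P_{n-1}) + 2`. -/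
theorem stmt12 (n : ℕ) (hn : 6 < n) :
    phi (SimpleGraph.pathGraph (n - 1)) + 2 ≤ phi (cycleGraph n) := by
  obtain ⟨m, rfl⟩ : ∃ m, n = m + 2 := ⟨n - 2, by omega⟩
  obtain ⟨T₁, T₂, hne, h𝒯⟩ :=
    exists_pair_isMaxDissoc_cycleGraph_not_isMaxDissoc_preimage (by omega : 5 ≤ m)
  simpa [Set.ncard_pair hne] using phi_add_ncard_le_phi (pathGraphEmbeddingCycleGraph m) h𝒯
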